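/- arXiv:2301.05992 — 3 statements merged into one kernel-verified Lean document; each statement's English description precedes it below -/
import Mathlib

section
/- Let x ~ N(0, I_n) be a standard Gaussian vector in R^n, and let Q be an (n+1)×(n+1) real symmetric positive semidefinite matrix with block structure Q = [[q11, q12^T], [q12, Q22]] where q11 is a scalar, q12 ∈ R^n, and Q22 is n×n. Then for any λ > 0, E[exp(-λ · (1,x)^T Q (1,x))] ≤ det(I_n + 2λ Q22)^{-1/2}. -/
open Matrix MeasureTheory ProbabilityTheory
open Real
open scoped ENNReal

/-!
Write the Gaussian density as `(2π)^(-n/2) exp(-|x|²/2)`. The expectation becomes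
`(2π)^(-n/2) ∫ exp(-φ)` with `φ x = |x|²/2 + λ (1,x)ᵀ Q (1,x) = xᵀAx/2 + bᵀx + c`, where
`A = I + 2λ Q₂₂` is positive definite. Completing the square, `φ x = (x+m)ᵀA(x+m)/2 + φ(-m)`
with `Am = b`, and `φ(-m) ≥ 0` because `φ ≥ 0` pointwise, since `Q` is positive semidefinite.
So `∫ exp(-φ) ≤ ∫ exp(-xᵀAx/2) = (2π)^(n/2) det(A)^(-1/2)`. The last integral is computed
by the substitution `y = Bx`, where `A = BᵀB`.
-/

namespace MeasureTheory

variable {α : Type*} [MeasurableSpace α]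

theorem lintegral_fin_nat_prod_eq_prod {n : ℕ} (μ : Fin n → Measure α) [∀ i, SigmaFinite (μ i)]
    {f : Fin n → α → ℝ≥0∞} (hf : ∀ i, Measurable (f i)) :
    ∫⁻ x : Fin n → α, ∏ i, f i (x i) ∂Measure.pi μ = ∏ i, ∫⁻ x, f i x ∂μ i := by
  induction n with
  | zero => simp
  | succ n ih =>
    calc
      _ = ∫⁻ x : α × (Fin n → α),
          f 0 x.1 * ∏ i : Fin n, f i.succ (x.2 i) ∂(μ 0).prod (Measure.pi fun i ↦ μ i.succ) := by
        rw [← ((measurePreserving_piFinSuccAbove μ 0).symm).lintegral_comp_emb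
          (MeasurableEquiv.measurableEmbedding _)]
        simp [MeasurableEquiv.piFinSuccAbove, Fin.prod_univ_succ, Fin.insertNthEquiv]
      _ = (∫⁻ x, f 0 x ∂μ 0) * ∫⁻ y, ∏ i : Fin n, f i.succ (y i) ∂Measure.pi fun i ↦ μ i.succ :=
        lintegral_prod_mul (hf 0).aemeasurable
          (Finset.measurable_prod _ fun (i : Fin n) _ ↦
            (hf i.succ).comp (measurable_pi_apply i)).aemeasurable
      _ = ∏ i, ∫⁻ x, f i x ∂μ i := by rw [ih _ fun i ↦ hf i.succ, Fin.prod_univ_succ]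

theorem Measure.pi_withDensity {n : ℕ} (μ : Fin n → Measure α) [∀ i, SigmaFinite (μ i)]
    {f : Fin n → α → ℝ≥0∞} (hf : ∀ i, Measurable (f i))
    [∀ i, SigmaFinite ((μ i).withDensity (f i))] :
    Measure.pi (fun i ↦ (μ i).withDensity (f i)) =
      (Measure.pi μ).withDensity fun x ↦ ∏ i, f i (x i) := by
  refine Measure.pi_eq (μ := fun i ↦ (μ i).withDensity (f i)) fun s hs ↦ ?_
  have hbox : (Set.univ.pi s).indicator (fun x ↦ ∏ i, f i (x i)) =
      fun x ↦ ∏ i, (s i).indicator (f i) (x i) := by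
    ext x
    simp only [Set.indicator, Finset.prod_ite_zero]
    split_ifs <;> simp_all
  rw [withDensity_apply _ (MeasurableSet.univ_pi hs),
    ← lintegral_indicator (MeasurableSet.univ_pi hs), hbox,
    lintegral_fin_nat_prod_eq_prod μ fun i ↦ (hf i).indicator (hs i)]
  simp_rw [lintegral_indicator (hs _), withDensity_apply _ (hs _)]

end MeasureTheory

theorem prod_gaussianPDFReal_zero_one {n : ℕ} (x : Fin n → ℝ) :
    ∏ i, gaussianPDFReal 0 1 (x i) = (√(2 * π) ^ n)⁻¹ * rexp (-(x ⬝ᵥ x) / 2) := by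
  simp only [gaussianPDFReal, NNReal.coe_one, mul_one, sub_zero, Finset.prod_mul_distrib,
    Finset.prod_const, Finset.card_univ, Fintype.card_fin, inv_pow, ← exp_sum,
    dotProduct, ← sq, Finset.sum_div, Finset.sum_neg_distrib, neg_div]

theorem integral_pi_gaussianReal_zero_one {n : ℕ} (g : (Fin n → ℝ) → ℝ) :
    ∫ x, g x ∂(Measure.pi fun _ : Fin n ↦ gaussianReal 0 1) =
      (√(2 * π) ^ n)⁻¹ * ∫ x, rexp (-(x ⬝ᵥ x) / 2) * g x := by
  have : SigmaFinite (volume.withDensity (gaussianPDF 0 1)) :=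
    gaussianReal_of_var_ne_zero 0 one_ne_zero ▸ inferInstance
  have hmeas : Measurable fun x : Fin n → ℝ ↦ ∏ i, gaussianPDF 0 1 (x i) :=
    Finset.measurable_prod _ fun i _ ↦ (measurable_gaussianPDF 0 1).comp (measurable_pi_apply i)
  rw [gaussianReal_of_var_ne_zero 0 one_ne_zero,
    Measure.pi_withDensity _ fun _ ↦ measurable_gaussianPDF 0 1, ← volume_pi,
    integral_withDensity_eq_integral_toReal_smul hmeas
      (ae_of_all _ fun x ↦ ENNReal.prod_lt_top fun i _ ↦ gaussianPDF_lt_top),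
    ← integral_const_mul]
  simp_rw [ENNReal.toReal_prod, toReal_gaussianPDF, prod_gaussianPDFReal_zero_one, smul_eq_mul,
    mul_assoc]

theorem integral_exp_neg_dotProduct_self_div_two (ι : Type*) [Fintype ι] :
    ∫ x : ι → ℝ, rexp (-(x ⬝ᵥ x) / 2) = √(2 * π) ^ Fintype.card ι := by
  have hsplit (x : ι → ℝ) : rexp (-(x ⬝ᵥ x) / 2) = ∏ i, rexp (-(1 / 2) * x i ^ 2) := by
    rw [← exp_sum, dotProduct, neg_div, Finset.sum_div, ← Finset.sum_neg_distrib]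
    exact congrArg rexp (Finset.sum_congr rfl fun i _ ↦ by ring)
  simp_rw [hsplit]
  rw [integral_fintype_prod_volume_eq_pow fun t : ℝ ↦ rexp (-(1 / 2) * t ^ 2), integral_gaussian]
  norm_num [div_div_eq_mul_div, mul_comm]

theorem integral_comp_mulVec {ι E : Type*} [Fintype ι] [DecidableEq ι] [NormedAddCommGroup E]
    [NormedSpace ℝ E] {M : Matrix ι ι ℝ} (hM : M.det ≠ 0) (g : (ι → ℝ) → E) :
    ∫ x, g (M *ᵥ x) = |M.det|⁻¹ • ∫ x, g x := by
  have hemb : MeasurableEmbedding (toLin' M) :=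
    (toLin' M).continuous_of_finiteDimensional.measurableEmbedding
      (mulVec_injective_iff_isUnit.mpr ((isUnit_iff_isUnit_det M).mpr hM.isUnit))
  change ∫ x, g (toLin' M x) = _
  rw [← hemb.integral_map, Real.map_matrix_volume_pi_eq_smul_volume_pi hM,
    integral_smul_measure, ENNReal.toReal_ofReal (abs_nonneg _), abs_inv]

namespace Matrix

variable {ι : Type*} [Fintype ι]

open scoped MatrixOrder in
theorem PosDef.integral_exp_neg_dotProduct_mulVec_div_two [DecidableEq ι] {A : Matrix ι ι ℝ}
    (hA : A.PosDef) :
    ∫ x : ι → ℝ, rexp (-(x ⬝ᵥ A *ᵥ x) / 2) = √(2 * π) ^ Fintype.card ι / √A.det := by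
  obtain ⟨B, rfl⟩ := CStarAlgebra.nonneg_iff_eq_star_mul_self.mp hA.posSemidef.nonneg
  have hdet : (star B * B).det = B.det ^ 2 := by
    rw [det_mul, star_eq_conjTranspose, det_conjTranspose, star_trivial, sq]
  have hB : B.det ≠ 0 := pow_ne_zero_iff two_ne_zero |>.mp (hdet ▸ hA.det_pos.ne')
  have hquad (x : ι → ℝ) : x ⬝ᵥ (star B * B) *ᵥ x = B *ᵥ x ⬝ᵥ B *ᵥ x := by
    rw [← mulVec_mulVec, dotProduct_mulVec, star_eq_conjTranspose,
      conjTranspose_eq_transpose_of_trivial, vecMul_transpose]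
  simp_rw [hquad]
  rw [integral_comp_mulVec hB fun y ↦ rexp (-(y ⬝ᵥ y) / 2),
    integral_exp_neg_dotProduct_self_div_two, hdet, sqrt_sq_eq_abs, smul_eq_mul,
    inv_mul_eq_div]

theorem IsSymm.add_dotProduct_mulVec_add {R : Type*} [CommSemiring R] {A : Matrix ι ι R}
    (hA : A.IsSymm) (x m : ι → R) :
    (x + m) ⬝ᵥ A *ᵥ (x + m) = x ⬝ᵥ A *ᵥ x + 2 * (A *ᵥ m ⬝ᵥ x) + m ⬝ᵥ A *ᵥ m := by
  have hcross : m ⬝ᵥ A *ᵥ x = A *ᵥ m ⬝ᵥ x := by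
    rw [dotProduct_mulVec, ← mulVec_transpose, hA.eq]
  rw [add_dotProduct, mulVec_add, dotProduct_add, dotProduct_add, hcross,
    dotProduct_comm x (A *ᵥ m)]
  ring

end Matrix

open Matrix in
theorem integral_exp_neg_quadratic_le_of_nonneg {ι : Type*} [Fintype ι] [DecidableEq ι]
    {A : Matrix ι ι ℝ}
    (hA : A.PosDef) (b : ι → ℝ) (c : ℝ)
    (hnonneg : ∀ x, 0 ≤ (x ⬝ᵥ A *ᵥ x) / 2 + b ⬝ᵥ x + c) :
    ∫ x, rexp (-((x ⬝ᵥ A *ᵥ x) / 2 + b ⬝ᵥ x + c)) ≤ √(2 * π) ^ Fintype.card ι / √A.det := by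
  set φ : (ι → ℝ) → ℝ := fun x ↦ (x ⬝ᵥ A *ᵥ x) / 2 + b ⬝ᵥ x + c
  set m := A⁻¹ *ᵥ b
  have hm : A *ᵥ m = b := by
    rw [mulVec_mulVec, mul_nonsing_inv _ hA.det_pos.ne'.isUnit, one_mulVec]
  have hshift (x : ι → ℝ) : φ x = ((x + m) ⬝ᵥ A *ᵥ (x + m)) / 2 + φ (-m) := by
    simp only [φ, (isHermitian_iff_isSymm.mp hA.isHermitian).add_dotProduct_mulVec_add,
      mulVec_neg, dotProduct_neg, neg_dotProduct, neg_neg, hm, dotProduct_comm m b]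
    ring
  calc ∫ x, rexp (-φ x) = rexp (-φ (-m)) * ∫ x, rexp (-((x + m) ⬝ᵥ A *ᵥ (x + m)) / 2) := by
        rw [← integral_const_mul]
        congr with x
        rw [hshift, ← exp_add]
        ring_nf
    _ = rexp (-φ (-m)) * (√(2 * π) ^ Fintype.card ι / √A.det) := by
        rw [integral_add_right_eq_self fun x ↦ rexp (-(x ⬝ᵥ A *ᵥ x) / 2),
          hA.integral_exp_neg_dotProduct_mulVec_div_two]
    _ ≤ √(2 * π) ^ Fintype.card ι / √A.det :=
        mul_le_of_le_one_left (by positivity) (exp_le_one_iff.mpr (neg_nonpos.mpr (hnonneg _)))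

theorem Matrix.cons_one_dotProduct_mulVec_cons_one {R : Type*} [CommSemiring R] {n : ℕ}
    (Q : Matrix (Fin (n + 1)) (Fin (n + 1)) R) (x : Fin n → R) :
    Fin.cons 1 x ⬝ᵥ Q *ᵥ Fin.cons 1 x =
      Q 0 0 + (fun j ↦ Q 0 j.succ) ⬝ᵥ x + x ⬝ᵥ (fun i ↦ Q i.succ 0) +
        x ⬝ᵥ Q.submatrix Fin.succ Fin.succ *ᵥ x := by
  simp only [dotProduct, mulVec, Fin.sum_univ_succ, Fin.cons_zero, Fin.cons_succ, submatrix_apply,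
    one_mul, mul_one, mul_add, Finset.sum_add_distrib, Finset.mul_sum]
  ring

theorem mgf_bound_quadratic_gaussian
    {n : ℕ} (Q : Matrix (Fin (n + 1)) (Fin (n + 1)) ℝ) (hQ : Q.PosSemidef)
    (lam : ℝ) (hlam : 0 < lam) :
    ∫ x : Fin n → ℝ, Real.exp (-lam * (Fin.cons 1 x ⬝ᵥ Q *ᵥ Fin.cons 1 x))
        ∂(Measure.pi fun _ => gaussianReal 0 1)
      ≤ ((1 + (2 * lam) • Q.submatrix Fin.succ Fin.succ).det) ^ (-(1 / 2) : ℝ) := by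
  set A : Matrix (Fin n) (Fin n) ℝ := 1 + (2 * lam) • Q.submatrix Fin.succ Fin.succ
  have hA : A.PosDef := PosDef.one.add_posSemidef ((hQ.submatrix Fin.succ).smul (by positivity))
  set b : Fin n → ℝ := lam • ((fun j ↦ Q 0 j.succ) + fun i ↦ Q i.succ 0)
  have hexponent (x : Fin n → ℝ) : (x ⬝ᵥ x) / 2 + lam * (Fin.cons 1 x ⬝ᵥ Q *ᵥ Fin.cons 1 x) =
      (x ⬝ᵥ A *ᵥ x) / 2 + b ⬝ᵥ x + lam * Q 0 0 := by
    rw [cons_one_dotProduct_mulVec_cons_one, add_mulVec, one_mulVec, smul_mulVec, dotProduct_add,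
      dotProduct_smul, smul_dotProduct, add_dotProduct, dotProduct_comm x fun i ↦ Q i.succ 0,
      smul_eq_mul, smul_eq_mul]
    ring
  have hnonneg (x : Fin n → ℝ) : 0 ≤ (x ⬝ᵥ A *ᵥ x) / 2 + b ⬝ᵥ x + lam * Q 0 0 := by
    have hQx : 0 ≤ Fin.cons 1 x ⬝ᵥ Q *ᵥ Fin.cons 1 x := by
      simpa only [star_trivial] using hQ.dotProduct_mulVec_nonneg (Fin.cons 1 x)
    have hxx : 0 ≤ x ⬝ᵥ x := by simpa only [star_trivial] using dotProduct_star_self_nonneg x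
    rw [← hexponent]
    positivity
  rw [integral_pi_gaussianReal_zero_one]
  calc _ = (√(2 * π) ^ n)⁻¹ * ∫ x, rexp (-((x ⬝ᵥ A *ᵥ x) / 2 + b ⬝ᵥ x + lam * Q 0 0)) := by
        congr with x
        rw [← hexponent, ← exp_add]
        ring_nf
    _ ≤ (√(2 * π) ^ n)⁻¹ * (√(2 * π) ^ n / √A.det) := by
        gcongr
        simpa only [Fintype.card_fin] using integral_exp_neg_quadratic_le_of_nonneg hA b _ hnonneg
    _ = A.det ^ (-(1 / 2) : ℝ) := by
        rw [rpow_neg hA.det_pos.le, ← sqrt_eq_rpow]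
        field_simp
end

section
/- Fix ε ∈ (0,1) and σ > 0, and define h(r) = (1/√(2π)) ∫_{-(1+ε)r/σ}^{-(1-ε)r/σ} exp(-x²/2) dx for r > 0. Then h attains its maximum over r > 0 at r★ = σ·√( log((1+ε)/(1-ε)) / (2ε) ). -/
/-!
With `t = r / σ`, `a = 1 - ε`, `b = 1 + ε` and after the reflection `x ↦ -x`, `h` is a constant
multiple of the integral of `exp (-x² / 2)` over `[a t, b t]`. Its `t`-derivative
`b exp (-(b t)² / 2) - a exp (-(a t)² / 2)` is nonnegative exactly when
`(b² - a²) t² ≤ 2 log (b / a)` (take logarithms), so for `t ≥ 0` the integral peaks at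
`t★ = √(2 log (b / a) / (b² - a²))`, which is `r★ / σ` for these `a`, `b`. For `t ≤ 0` it is
nonpositive, being odd in `t`.
-/

open Real Set

noncomputable def gaussianWindow (a b t : ℝ) : ℝ :=
  ∫ x in a * t..b * t, exp (-x ^ 2 / 2)

noncomputable def gaussianWindowPeak (a b : ℝ) : ℝ :=
  √(2 * log (b / a) / (b ^ 2 - a ^ 2))

theorem integral_neg_eq_gaussianWindow (a b t : ℝ) :
    ∫ x in -(b * t)..-(a * t), exp (-x ^ 2 / 2) = gaussianWindow a b t := by
  rw [gaussianWindow, ← intervalIntegral.integral_comp_neg]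
  simp only [neg_sq]

theorem hasDerivAt_gaussianWindow (a b t : ℝ) :
    HasDerivAt (gaussianWindow a b)
      (b * exp (-(b * t) ^ 2 / 2) - a * exp (-(a * t) ^ 2 / 2)) t := by
  have hcont : Continuous fun x : ℝ => exp (-x ^ 2 / 2) := by fun_prop
  have hprimitive (u : ℝ) : HasDerivAt (fun v => ∫ x in (0 : ℝ)..v, exp (-x ^ 2 / 2))
      (exp (-u ^ 2 / 2)) u :=
    hcont.integral_hasStrictDerivAt 0 u |>.hasDerivAt
  have hsplit : gaussianWindow a b = fun t =>
      (∫ x in (0 : ℝ)..b * t, exp (-x ^ 2 / 2)) - ∫ x in (0 : ℝ)..a * t, exp (-x ^ 2 / 2) := by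
    funext t
    exact (intervalIntegral.integral_interval_sub_left (hcont.intervalIntegrable _ _)
      (hcont.intervalIntegrable _ _)).symm
  rw [hsplit, mul_comm b, mul_comm a]
  exact ((hprimitive _).comp t ((hasDerivAt_id t).const_mul b)).sub
    ((hprimitive _).comp t ((hasDerivAt_id t).const_mul a)) |>.congr_deriv (by simp)

theorem gaussianWindow_neg (a b t : ℝ) : gaussianWindow a b (-t) = -gaussianWindow a b t := by
  rw [gaussianWindow, mul_neg, mul_neg, intervalIntegral.integral_symm,
    integral_neg_eq_gaussianWindow]

theorem gaussianWindow_nonneg {a b t : ℝ} (hab : a ≤ b) (ht : 0 ≤ t) : 0 ≤ gaussianWindow a b t :=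
  intervalIntegral.integral_nonneg (mul_le_mul_of_nonneg_right hab ht) fun _ _ => (exp_pos _).le

theorem differentiable_gaussianWindow (a b : ℝ) : Differentiable ℝ (gaussianWindow a b) :=
  fun t => (hasDerivAt_gaussianWindow a b t).differentiableAt

theorem mul_exp_neg_sq_le_mul_exp_neg_sq_iff {a b : ℝ} (ha : 0 < a) (hb : 0 < b) (t : ℝ) :
    a * exp (-(a * t) ^ 2 / 2) ≤ b * exp (-(b * t) ^ 2 / 2) ↔
      (b ^ 2 - a ^ 2) * t ^ 2 ≤ 2 * log (b / a) := by
  rw [← exp_log ha, ← exp_log hb, ← exp_add, ← exp_add, exp_le_exp, exp_log ha, exp_log hb,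
    log_div hb.ne' ha.ne']
  constructor <;> intro h <;> linarith

section Peak

variable {a b : ℝ} (ha : 0 < a) (hab : a < b)
include ha hab

theorem abs_le_gaussianWindowPeak_iff (t : ℝ) :
    |t| ≤ gaussianWindowPeak a b ↔ (b ^ 2 - a ^ 2) * t ^ 2 ≤ 2 * log (b / a) := by
  have hdiff : 0 < b ^ 2 - a ^ 2 := by nlinarith
  have hlog : 0 < log (b / a) := log_pos <| (one_lt_div ha).2 hab
  have hpeak : 0 ≤ gaussianWindowPeak a b := sqrt_nonneg _
  rw [← abs_of_nonneg hpeak, ← sq_le_sq, gaussianWindowPeak, sq_sqrt (by positivity),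
    le_div_iff₀ hdiff, mul_comm]

theorem deriv_gaussianWindow_nonneg_iff (t : ℝ) :
    0 ≤ deriv (gaussianWindow a b) t ↔ |t| ≤ gaussianWindowPeak a b := by
  rw [(hasDerivAt_gaussianWindow a b t).deriv, sub_nonneg,
    mul_exp_neg_sq_le_mul_exp_neg_sq_iff ha (ha.trans hab), abs_le_gaussianWindowPeak_iff ha hab]

theorem monotoneOn_gaussianWindow :
    MonotoneOn (gaussianWindow a b) (Icc (-gaussianWindowPeak a b) (gaussianWindowPeak a b)) := by
  refine monotoneOn_of_deriv_nonneg (convex_Icc _ _)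
    (differentiable_gaussianWindow a b).continuous.continuousOn
    (differentiable_gaussianWindow a b).differentiableOn fun t ht => ?_
  rw [interior_Icc] at ht
  exact (deriv_gaussianWindow_nonneg_iff ha hab t).2 (abs_le.2 ⟨ht.1.le, ht.2.le⟩)

theorem antitoneOn_gaussianWindow :
    AntitoneOn (gaussianWindow a b) (Ici (gaussianWindowPeak a b)) := by
  refine antitoneOn_of_deriv_nonpos (convex_Ici _)
    (differentiable_gaussianWindow a b).continuous.continuousOn
    (differentiable_gaussianWindow a b).differentiableOn fun t ht => ?_
  rw [interior_Ici] at ht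
  have hpeak : gaussianWindowPeak a b < |t| := lt_abs.2 (.inl ht)
  exact (not_le.1 <| mt (deriv_gaussianWindow_nonneg_iff ha hab t).1 hpeak.not_ge).le

theorem gaussianWindow_le_gaussianWindowPeak (t : ℝ) :
    gaussianWindow a b t ≤ gaussianWindow a b (gaussianWindowPeak a b) := by
  set p := gaussianWindowPeak a b
  have hp : 0 ≤ p := sqrt_nonneg _
  rcases le_total t 0 with hneg | hpos
  · calc gaussianWindow a b t = -gaussianWindow a b (-t) := by rw [gaussianWindow_neg, neg_neg]
      _ ≤ 0 := neg_nonpos.2 (gaussianWindow_nonneg hab.le (neg_nonneg.2 hneg))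
      _ ≤ gaussianWindow a b p := gaussianWindow_nonneg hab.le hp
  rcases le_total t p with hleft | hright
  · exact monotoneOn_gaussianWindow ha hab ⟨by linarith, hleft⟩ ⟨by linarith, le_rfl⟩ hleft
  · exact antitoneOn_gaussianWindow ha hab self_mem_Ici hright hright

end Peak

theorem gaussianWindowPeak_one_sub_one_add (ε : ℝ) :
    gaussianWindowPeak (1 - ε) (1 + ε) = √(log ((1 + ε) / (1 - ε)) / (2 * ε)) := by
  rw [gaussianWindowPeak, show (1 + ε) ^ 2 - (1 - ε) ^ 2 = 2 * (2 * ε) by ring,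
    mul_div_mul_left _ _ two_ne_zero]

theorem gaussian_interval_measure_max_general
    (ε σ : ℝ) (hε : ε ∈ Set.Ioo (0 : ℝ) 1) (hσ : 0 < σ) (r : ℝ) :
    (1 / Real.sqrt (2 * π)) *
        (∫ x in (-(1 + ε) * r / σ)..(-(1 - ε) * r / σ), Real.exp (-x ^ 2 / 2))
      ≤ (1 / Real.sqrt (2 * π)) *
        (∫ x in
            (-(1 + ε) * (σ * Real.sqrt (Real.log ((1 + ε) / (1 - ε)) / (2 * ε))) / σ)..(
            -(1 - ε) * (σ * Real.sqrt (Real.log ((1 + ε) / (1 - ε)) / (2 * ε))) / σ),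
          Real.exp (-x ^ 2 / 2)) := by
  obtain ⟨hε0, hε1⟩ := hε
  have hwindow (t : ℝ) : ∫ x in (-(1 + ε) * (σ * t) / σ)..(-(1 - ε) * (σ * t) / σ),
      exp (-x ^ 2 / 2) = gaussianWindow (1 - ε) (1 + ε) t := by
    rw [← integral_neg_eq_gaussianWindow]
    congr 1 <;> field_simp
  rw [show r = σ * (r / σ) by field_simp, hwindow, hwindow, ← gaussianWindowPeak_one_sub_one_add]
  exact mul_le_mul_of_nonneg_left
    (gaussianWindow_le_gaussianWindowPeak (by linarith) (by linarith) _) (by positivity)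

theorem gaussian_interval_measure_max
    (ε σ : ℝ) (hε : ε ∈ Set.Ioo (0 : ℝ) 1) (hσ : 0 < σ) (r : ℝ) (hr : 0 < r) :
    (1 / Real.sqrt (2 * π)) *
        (∫ x in (-(1 + ε) * r / σ)..(-(1 - ε) * r / σ), Real.exp (-x ^ 2 / 2))
      ≤ (1 / Real.sqrt (2 * π)) *
        (∫ x in
            (-(1 + ε) * (σ * Real.sqrt (Real.log ((1 + ε) / (1 - ε)) / (2 * ε))) / σ)..(
            -(1 - ε) * (σ * Real.sqrt (Real.log ((1 + ε) / (1 - ε)) / (2 * ε))) / σ),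
          Real.exp (-x ^ 2 / 2)) :=
  gaussian_interval_measure_max_general ε σ hε hσ r
end

section
/- Let Q = [[q11, q12^T], [q12, Q22]] be an (n+1)×(n+1) real symmetric positive semidefinite matrix in block form and let γ > 0. Then for all x ∈ R^n, q11 + γ + 2 q12^T x + x^T Q22 x ≥ ( (q11+γ)^{1/2} + (q11+γ)^{-1/2} q12^T x )². -/
/-!
Expanding the square, the claim reads `b ^ 2 / (q₁₁ + γ) ≤ c` with `b = q₁₂ᵀ x` and
`c = xᵀ Q₂₂ x`. This follows from the Cauchy–Schwarz inequality `b ^ 2 ≤ q₁₁ c` for the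
positive semidefinite form of `Q`, applied to the vectors `(0, x)` and `e₀`.
-/

open Matrix

theorem Matrix.PosSemidef.dotProduct_mulVec_sq_le {ι R : Type*} [Fintype ι] [DecidableEq ι]
    [CommRing R] [LinearOrder R] [IsStrictOrderedRing R] [StarRing R] [TrivialStar R]
    {Q : Matrix ι ι R} (hQ : Q.PosSemidef) (u v : ι → R) :
    (u ⬝ᵥ Q *ᵥ v) ^ 2 ≤ (u ⬝ᵥ Q *ᵥ u) * (v ⬝ᵥ Q *ᵥ v) := by
  have hsymm : LinearMap.IsSymm (toBilin' Q) := LinearMap.isSymm_def.mpr fun u v => by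
    rw [RingHom.id_apply, toBilin'_apply', toBilin'_apply', dotProduct_mulVec, ← mulVec_transpose,
      dotProduct_comm, ← conjTranspose_eq_transpose_of_trivial, hQ.isHermitian.eq]
  have hnonneg (w : ι → R) : 0 ≤ toBilin' Q w w := by
    simpa only [toBilin'_apply', star_trivial] using hQ.dotProduct_mulVec_nonneg w
  simpa only [toBilin'_apply'] using (toBilin' Q).apply_sq_le_of_symm hnonneg hsymm u v

section Block

variable {n : ℕ} {R : Type*}

theorem Matrix.cons_zero_dotProduct_mulVec_cons_zero [CommSemiring R]
    (Q : Matrix (Fin (n + 1)) (Fin (n + 1)) R) (x : Fin n → R) :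
    Fin.cons 0 x ⬝ᵥ Q *ᵥ Fin.cons 0 x = x ⬝ᵥ Q.submatrix Fin.succ Fin.succ *ᵥ x := by
  simp [dotProduct, mulVec, Fin.sum_univ_succ]

theorem Matrix.cons_zero_dotProduct_mulVec_single_zero [CommSemiring R]
    (Q : Matrix (Fin (n + 1)) (Fin (n + 1)) R) (x : Fin n → R) :
    Fin.cons 0 x ⬝ᵥ Q *ᵥ Pi.single 0 1 = (fun i => Q (Fin.succ i) 0) ⬝ᵥ x := by
  simp [dotProduct, Fin.sum_univ_succ, mul_comm]

theorem Matrix.PosSemidef.sq_succ_col_dotProduct_le [CommRing R] [LinearOrder R]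
    [IsStrictOrderedRing R] [StarRing R] [TrivialStar R]
    {Q : Matrix (Fin (n + 1)) (Fin (n + 1)) R} (hQ : Q.PosSemidef) (x : Fin n → R) :
    ((fun i => Q (Fin.succ i) 0) ⬝ᵥ x) ^ 2 ≤ Q 0 0 * (x ⬝ᵥ Q.submatrix Fin.succ Fin.succ *ᵥ x) := by
  have h := hQ.dotProduct_mulVec_sq_le (Fin.cons 0 x) (Pi.single 0 1)
  rwa [cons_zero_dotProduct_mulVec_cons_zero, cons_zero_dotProduct_mulVec_single_zero,
    mulVec_single_one, single_one_dotProduct, col_apply, mul_comm] at h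

end Block

theorem Real.sq_sqrt_add_div_sqrt_le {a b c : ℝ} (ha : 0 < a) (hbc : b ^ 2 ≤ a * c) :
    (√a + b / √a) ^ 2 ≤ a + 2 * b + c := by
  have hexpand : (√a + b / √a) ^ 2 = a + 2 * b + b ^ 2 / a := by
    field_simp
    rw [Real.sq_sqrt ha.le]
    ring
  rw [hexpand]
  gcongr
  rwa [div_le_iff₀' ha]

theorem complete_square_lower_bound
    {n : ℕ} (Q : Matrix (Fin (n + 1)) (Fin (n + 1)) ℝ) (hQ : Q.PosSemidef)
    (γ : ℝ) (hγ : 0 < γ) (x : Fin n → ℝ) :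
    ((Q 0 0 + γ) ^ ((1 : ℝ) / 2) +
        (Q 0 0 + γ) ^ (-(1 : ℝ) / 2) * ((fun i => Q (Fin.succ i) 0) ⬝ᵥ x)) ^ 2
      ≤ Q 0 0 + γ + 2 * ((fun i => Q (Fin.succ i) 0) ⬝ᵥ x) +
          x ⬝ᵥ (Q.submatrix Fin.succ Fin.succ) *ᵥ x := by
  have hpos : 0 < Q 0 0 + γ := by linarith [hQ.diag_nonneg (i := 0)]
  have hquad : 0 ≤ x ⬝ᵥ Q.submatrix Fin.succ Fin.succ *ᵥ x := by
    simpa using (hQ.submatrix Fin.succ).dotProduct_mulVec_nonneg x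
  rw [neg_div, Real.rpow_neg hpos.le, ← Real.sqrt_eq_rpow, ← div_eq_inv_mul]
  refine Real.sq_sqrt_add_div_sqrt_le hpos ((hQ.sq_succ_col_dotProduct_le x).trans ?_)
  gcongr
  linarith
end
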